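/- Define k_{c,b} = (e(c,b) + e_p(c,b))/4, the number of 2-bridge knots with crossing number c and braid index b. Then k_{c,b} equals: 1 if c ≥ 3 is odd and b = 2; 2^{b−4}·C(c−b,b−2) if c ≥ 3, 3 ≤ b ≤ ⌈(c+1)/2⌉, and c+b is even; 2^{b−4}·C(c−b,b−2) + 2^{(b−5)/2}·C((c−b−1)/2,(b−3)/2) if c ≥ 3, 3 ≤ b ≤ ⌈(c+1)/2⌉, c is even and b is odd; 2^{b−4}·C(c−b,b−2) + 2^{(b−4)/2}·C((c−b−1)/2,(b−2)/2) if c ≥ 3, 3 ≤ b ≤ ⌈(c+1)/2⌉, c is odd and b is even; and 0 otherwise. -/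

import Mathlib

open Classical

/-- The number of sign changes in a finite sequence of integers. -/
def signChanges (l : List ℤ) : ℕ :=
  ((l.zip l.tail).filter (fun p => p.1 * p.2 < 0)).length

/-- The sum of the absolute values of the entries. -/
def absSum (l : List ℤ) : ℕ := (l.map Int.natAbs).sum

/-- An even continued fraction representation: a nonempty even-length
sequence of nonzero integers. -/
def IsECF (l : List ℤ) : Prop :=
  l ≠ [] ∧ Even l.length ∧ ∀ x ∈ l, x ≠ 0

/-- Palindromic or anti-palindromic sequences. -/
def IsPalOrAnti (l : List ℤ) : Prop :=
  l.reverse = l ∨ l.reverse = l.map (fun x => -x)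

/-- The set `E(c)` of even continued fractions with crossing number `c`. -/
def Ecross (c : ℕ) : Set (List ℤ) :=
  {l | IsECF l ∧ (2 * absSum l : ℤ) - signChanges l = c}

/-- The set `E(c,b)` of even continued fractions with crossing number `c`
and braid index `b`. -/
def Eset (c b : ℕ) : Set (List ℤ) :=
  {l | IsECF l ∧ (2 * absSum l : ℤ) - signChanges l = c ∧
    (absSum l : ℤ) - signChanges l + 1 = b}

noncomputable def e (c b : ℕ) : ℕ := (Eset c b).ncard

noncomputable def eTot (c : ℕ) : ℕ := (Ecross c).ncard

noncomputable def ep (c b : ℕ) : ℕ := (Eset c b ∩ {l | IsPalOrAnti l}).ncard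

noncomputable def epTot (c : ℕ) : ℕ := (Ecross c ∩ {l | IsPalOrAnti l}).ncard

/-- The number of 2-bridge knots with crossing number `c` and braid index `b`. -/
noncomputable def numKnots (c b : ℕ) : ℚ := ((e c b : ℚ) + (ep c b : ℚ)) / 4

/-!
A sequence of nonzero integers is determined by its signs and its absolute values. With
length `n + 1`, absolute sum `S + 1` and `ℓ` sign changes there are `2 * C(n, ℓ)` sign patterns
and `C(S, n)` compositions of `S + 1`. The two defining equations of `E(c, b)` say that the
absolute sum is `c + 1 - b` and the number of sign changes is `c + 2 - 2b`, so `e(c, b)` is a sum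
of `2 * C(n, ℓ) * C(c - b, n)` over odd `n`. Since `C(N, n) * C(n, ℓ) = C(N, ℓ) * C(N - ℓ, n - ℓ)`,
and the binomial coefficients `C(M, i)` with `i` of fixed parity add up to `2 ^ (M - 1)`, this
is `2 ^ (b - 2) * C(c - b, b - 2)` for `b ≥ 3`.

A palindromic or anti-palindromic sequence is its first half `h` followed by the reversal of
`h` or of `-h`; the junction contributes a sign change exactly in the anti-palindromic case.
So `h` has half the absolute sum and `⌊ℓ / 2⌋` sign changes, it may have any length, and the same
count applies with the full binomial sum `2 ^ (N - ℓ)`. The absolute sum is even only when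
`c + b` is odd, which is why `e_p` vanishes otherwise.
-/

open Finset

section AdjacentPairs

variable {α β : Type*}

def adjCount (p : α → α → Bool) (l : List α) : ℕ :=
  ((l.zip l.tail).filter fun q => p q.1 q.2).length

@[simp]
theorem adjCount_nil (p : α → α → Bool) : adjCount p [] = 0 := rfl

@[simp]
theorem adjCount_singleton (p : α → α → Bool) (a : α) : adjCount p [a] = 0 := rfl

theorem adjCount_cons_cons (p : α → α → Bool) (a b : α) (t : List α) :
    adjCount p (a :: b :: t) = (p a b).toNat + adjCount p (b :: t) := by
  cases h : p a b <;> simp [adjCount, h, Nat.add_comm]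

theorem adjCount_append (p : α → α → Bool) {u v : List α} (hu : u ≠ []) (hv : v ≠ []) :
    adjCount p (u ++ v) =
      adjCount p u + adjCount p v + (p (u.getLast hu) (v.head hv)).toNat := by
  induction u with
  | nil => exact absurd rfl hu
  | cons a u ih =>
    obtain ⟨b, w, rfl⟩ := List.exists_cons_of_ne_nil hv
    rcases u with _ | ⟨a', u⟩
    · simp [adjCount_cons_cons, Nat.add_comm]
    · simp only [List.cons_append, adjCount_cons_cons] at ih ⊢
      rw [ih (List.cons_ne_nil _ _)]
      simp only [List.getLast_cons_cons]
      ring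

theorem adjCount_reverse {p : α → α → Bool} (hp : ∀ a b, p a b = p b a) :
    ∀ l : List α, adjCount p l.reverse = adjCount p l
  | [] => rfl
  | [_] => rfl
  | a :: b :: t => by
    have hne : (b :: t).reverse ≠ [] := by simp
    rw [List.reverse_cons, adjCount_append p hne (List.cons_ne_nil a []),
      adjCount_reverse hp (b :: t), adjCount_cons_cons, List.getLast_reverse]
    simp [hp b a, Nat.add_comm]

theorem adjCount_map (p : β → β → Bool) (f : α → β) :
    ∀ l : List α, adjCount p (l.map f) = adjCount (fun a b => p (f a) (f b)) l
  | [] => rfl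
  | [_] => rfl
  | a :: b :: t => by
    rw [List.map_cons, List.map_cons, adjCount_cons_cons, ← List.map_cons,
      adjCount_map p f (b :: t), adjCount_cons_cons]

theorem adjCount_congr {p q : α → α → Bool} :
    ∀ {l : List α}, (∀ a ∈ l, ∀ b ∈ l, p a b = q a b) → adjCount p l = adjCount q l
  | [], _ => rfl
  | [_], _ => rfl
  | a :: b :: t, h => by
    rw [adjCount_cons_cons, adjCount_cons_cons, h a (by simp) b (by simp),
      adjCount_congr fun x hx y hy => h x (.tail _ hx) y (.tail _ hy)]

theorem adjCount_lt_length (p : α → α → Bool) {l : List α} (hl : l ≠ []) :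
    adjCount p l < l.length := by
  obtain ⟨a, t, rfl⟩ := List.exists_cons_of_ne_nil hl
  have := List.length_filter_le (fun q : α × α => p q.1 q.2) ((a :: t).zip t)
  simp only [List.length_zip, List.length_cons] at this
  simp only [adjCount, List.tail_cons, List.length_cons]
  omega

end AdjacentPairs

theorem signChanges_eq_adjCount (l : List ℤ) :
    signChanges l = adjCount (fun x y => decide (x * y < 0)) l := rfl

section SignPatterns

def changeLists : ℕ → ℕ → Finset (List Bool)
  | 0, 0 => {[false], [true]}
  | 0, _ + 1 => ∅
  | n + 1, 0 => (changeLists n 0).image fun g => g.head! :: g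
  | n + 1, ℓ + 1 => (changeLists n (ℓ + 1)).image (fun g => g.head! :: g) ∪
      (changeLists n ℓ).image fun g => (!g.head!) :: g

theorem mem_changeLists {n ℓ : ℕ} {g : List Bool} :
    g ∈ changeLists n ℓ ↔ g.length = n + 1 ∧ adjCount (· != ·) g = ℓ := by
  induction n generalizing ℓ g with
  | zero =>
    rcases g with _ | ⟨a, _ | ⟨b, t⟩⟩ <;> rcases ℓ with _ | ℓ <;> simp [changeLists]
  | succ n ih =>
    rcases g with _ | ⟨a, _ | ⟨b, t⟩⟩ <;> rcases ℓ with _ | ℓ <;> (try cases a) <;>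
      (try cases b) <;> simp [changeLists, ih, adjCount_cons_cons] <;> omega

theorem card_changeLists (n ℓ : ℕ) : (changeLists n ℓ).card = 2 * n.choose ℓ := by
  have cons_inj (f : List Bool → Bool) : Function.Injective fun g => f g :: g :=
    fun _ _ h => (List.cons.inj h).2
  induction n generalizing ℓ with
  | zero => rcases ℓ with _ | ℓ <;> simp [changeLists]
  | succ n ih =>
    rcases ℓ with _ | ℓ
    · simp [changeLists, card_image_of_injective _ (cons_inj _), ih]
    · rw [changeLists, card_union_of_disjoint, card_image_of_injective _ (cons_inj _),
        card_image_of_injective _ (cons_inj _), ih, ih, Nat.choose_succ_succ', mul_add, add_comm]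
      simp only [disjoint_left, mem_image, not_exists, not_and]
      rintro _ ⟨g, -, rfl⟩ g' - h
      obtain ⟨h₁, rfl⟩ := List.cons.inj h
      simp at h₁

end SignPatterns

section Compositions

def compositionLists : ℕ → ℕ → Finset (List ℕ)
  | 0, 0 => {[]}
  | 0, _ + 1 => ∅
  | _ + 1, 0 => ∅
  | S + 1, n + 1 => (compositionLists S n).image (1 :: ·) ∪
      (compositionLists S (n + 1)).image fun h => (h.head! + 1) :: h.tail

theorem mem_compositionLists {S n : ℕ} {h : List ℕ} :
    h ∈ compositionLists S n ↔ h.length = n ∧ (∀ x ∈ h, x ≠ 0) ∧ h.sum = S := by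
  induction S generalizing n h with
  | zero => rcases h with _ | ⟨a, t⟩ <;> rcases n with _ | n <;> simp +contextual [compositionLists]
  | succ S ih =>
    rcases h with _ | ⟨a, t⟩
    · rcases n with _ | n <;> simp [compositionLists]
    rcases n with _ | n
    · simp [compositionLists]
    simp only [compositionLists, mem_union, mem_image, ih, List.cons.injEq, exists_eq_right_right,
      List.length_cons, Nat.add_right_cancel_iff, List.forall_mem_cons, List.sum_cons]
    constructor
    · rintro (⟨⟨hl, hpos, hsum⟩, rfl⟩ | ⟨_ | ⟨x, t'⟩, ⟨hl, hpos, hsum⟩, rfl, rfl⟩)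
      · exact ⟨hl, ⟨one_ne_zero, hpos⟩, by omega⟩
      · simp at hl
      · simp only [List.head!_cons, List.tail_cons, List.length_cons, List.sum_cons,
          List.forall_mem_cons] at hl hpos hsum ⊢
        exact ⟨by omega, ⟨by omega, hpos.2⟩, by omega⟩
    · rintro ⟨hl, ⟨ha, hpos⟩, hsum⟩
      obtain rfl | ha1 := eq_or_ne a 1
      · exact Or.inl ⟨⟨hl, hpos, by omega⟩, rfl⟩
      · refine Or.inr ⟨(a - 1) :: t, ⟨by simp [hl], ?_, ?_⟩, ?_, rfl⟩ <;>
          simp only [List.forall_mem_cons, List.sum_cons, List.head!_cons]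
        · exact ⟨by omega, hpos⟩
        all_goals omega

theorem card_compositionLists (S n : ℕ) :
    (compositionLists (S + 1) (n + 1)).card = S.choose n := by
  induction S generalizing n with
  | zero => rcases n with _ | n <;> simp [compositionLists]
  | succ S ih =>
    have head_ne_zero {h : List ℕ} (hh : h ∈ compositionLists (S + 1) (n + 1)) : h.head! ≠ 0 := by
      obtain ⟨hl, hpos, -⟩ := mem_compositionLists.1 hh
      obtain ⟨x, t, rfl⟩ := List.exists_cons_of_length_eq_add_one hl
      exact hpos x (by simp)
    have inj : Set.InjOn (fun h : List ℕ => (h.head! + 1) :: h.tail)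
        (compositionLists (S + 1) (n + 1)) := by
      intro x hx y hy hxy
      obtain ⟨hhead, htail⟩ := List.cons.inj hxy
      have ne_nil {h : List ℕ} (hh : h ∈ compositionLists (S + 1) (n + 1)) : h ≠ [] := by
        rintro rfl
        exact head_ne_zero hh rfl
      rw [← List.cons_head!_tail (ne_nil hx), ← List.cons_head!_tail (ne_nil hy),
        Nat.succ_inj.1 hhead, htail]
    rw [compositionLists, card_union_of_disjoint, card_image_of_injective _ (List.cons_injective),
      card_image_of_injOn inj]
    · rcases n with _ | n
      · simp [card_empty, show compositionLists (S + 1) 0 = ∅ from rfl, ih]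
      · rw [ih, ih, Nat.choose_succ_succ']
    · simp only [disjoint_left, mem_image, not_exists, not_and]
      rintro _ ⟨g, -, rfl⟩ g' hg' h
      have := head_ne_zero hg'
      have := (List.cons.inj h).1
      omega

end Compositions

section SignedLists

def withSigns (g : List Bool) (h : List ℕ) : List ℤ :=
  List.zipWith (fun s k => if s then (k : ℤ) else -k) g h

@[simp]
theorem withSigns_cons (s : Bool) (g : List Bool) (k : ℕ) (h : List ℕ) :
    withSigns (s :: g) (k :: h) = (if s then (k : ℤ) else -k) :: withSigns g h := rfl

theorem map_natAbs_withSigns :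
    ∀ {g : List Bool} {h : List ℕ}, g.length = h.length → (withSigns g h).map Int.natAbs = h
  | [], [], _ => rfl
  | s :: g, k :: h, hl => by
    cases s <;> simp [map_natAbs_withSigns (g := g) (h := h) (by simpa using hl)]

theorem map_pos_withSigns : ∀ {g : List Bool} {h : List ℕ}, g.length = h.length →
    (∀ k ∈ h, k ≠ 0) → (withSigns g h).map (fun x => decide (0 < x)) = g
  | [], [], _, _ => rfl
  | s :: g, k :: h, hl, hpos => by
    have := map_pos_withSigns (g := g) (h := h) (by simpa using hl)
      (fun x hx => hpos x (.tail _ hx))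
    have hk := Nat.pos_of_ne_zero (hpos k (.head _))
    cases s <;> simp [this, hk]

theorem withSigns_map_pos_map_natAbs :
    ∀ l : List ℤ, withSigns (l.map fun x => decide (0 < x)) (l.map Int.natAbs) = l
  | [] => rfl
  | x :: l => by
    simp only [List.map_cons, withSigns_cons, withSigns_map_pos_map_natAbs l, List.cons.injEq,
      and_true]
    by_cases h : 0 < x
    · simp [h, abs_of_pos h]
    · simp [h, abs_of_nonpos (not_lt.1 h)]

theorem adjCount_map_pos {l : List ℤ} (hl : ∀ x ∈ l, x ≠ 0) :
    adjCount (· != ·) (l.map fun x => decide (0 < x)) = signChanges l := by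
  rw [adjCount_map, signChanges_eq_adjCount]
  refine adjCount_congr fun a ha b hb => ?_
  have := hl a ha
  have := hl b hb
  rw [Bool.eq_iff_iff]
  simp only [bne_iff_ne, ne_eq, decide_eq_decide, decide_eq_true_eq, mul_neg_iff]
  omega

def signedLists (n S ℓ : ℕ) : Finset (List ℤ) :=
  (changeLists n ℓ ×ˢ compositionLists S (n + 1)).image fun p => withSigns p.1 p.2

theorem mem_signedLists {n S ℓ : ℕ} {l : List ℤ} :
    l ∈ signedLists n S ℓ ↔
      l.length = n + 1 ∧ (∀ x ∈ l, x ≠ 0) ∧ absSum l = S ∧ signChanges l = ℓ := by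
  constructor
  · simp only [signedLists, mem_image, mem_product, mem_changeLists, mem_compositionLists]
    rintro ⟨⟨g, h⟩, ⟨⟨hg, hchg⟩, hh, hpos, hsum⟩, rfl⟩
    have habs := map_natAbs_withSigns (hg.trans hh.symm)
    have hnz : ∀ x ∈ withSigns g h, x ≠ 0 := by
      rintro x hx rfl
      exact hpos 0 (habs ▸ List.mem_map_of_mem hx) rfl
    refine ⟨by rw [← List.length_map Int.natAbs, habs, hh], hnz, by rw [absSum, habs, hsum], ?_⟩
    rw [← adjCount_map_pos hnz, map_pos_withSigns (hg.trans hh.symm) hpos, hchg]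
  · rintro ⟨hl, hnz, hsum, hsc⟩
    refine mem_image.2 ⟨⟨_, _⟩, mem_product.2 ⟨?_, ?_⟩, withSigns_map_pos_map_natAbs l⟩
    · exact mem_changeLists.2 ⟨by simp [hl], by rw [adjCount_map_pos hnz, hsc]⟩
    · refine mem_compositionLists.2 ⟨by simp [hl], ?_, hsum⟩
      simpa using hnz

theorem card_signedLists (n S ℓ : ℕ) :
    (signedLists n (S + 1) ℓ).card = 2 * n.choose ℓ * S.choose n := by
  rw [signedLists, card_image_of_injOn, card_product, card_changeLists, card_compositionLists]
  rintro ⟨g, h⟩ hp ⟨g', h'⟩ hp' heq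
  simp only [coe_product, Set.mem_prod, mem_coe, mem_changeLists, mem_compositionLists] at hp hp'
  have hl : g.length = h.length := hp.1.1.trans hp.2.1.symm
  have hl' : g'.length = h'.length := hp'.1.1.trans hp'.2.1.symm
  simp only [Prod.mk.injEq]
  constructor
  · rw [← map_pos_withSigns hl hp.2.2.1, ← map_pos_withSigns hl' hp'.2.2.1]
    exact congrArg _ heq
  · rw [← map_natAbs_withSigns hl, ← map_natAbs_withSigns hl']
    exact congrArg _ heq

theorem length_le_absSum : ∀ {l : List ℤ}, (∀ x ∈ l, x ≠ 0) → l.length ≤ absSum l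
  | [], _ => le_rfl
  | x :: l, hl => by
    have := length_le_absSum fun y hy => hl y (.tail _ hy)
    have := Int.natAbs_ne_zero.2 (hl x (.head _))
    simp only [absSum, List.map_cons, List.sum_cons, List.length_cons] at *
    omega

theorem ncard_nonzero_lists (P : ℕ → Prop) [DecidablePred P] (S ℓ : ℕ) :
    {l : List ℤ | l ≠ [] ∧ P l.length ∧ (∀ x ∈ l, x ≠ 0) ∧ absSum l = S + 1 ∧
        signChanges l = ℓ}.ncard =
      2 * ∑ m ∈ (range (S + 1)).filter (fun m => P (m + 1)), S.choose m * m.choose ℓ := by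
  have hset : {l : List ℤ | l ≠ [] ∧ P l.length ∧ (∀ x ∈ l, x ≠ 0) ∧ absSum l = S + 1 ∧
        signChanges l = ℓ} =
      ↑(((range (S + 1)).filter fun m => P (m + 1)).biUnion fun m => signedLists m (S + 1) ℓ) := by
    ext l
    simp only [Set.mem_ofPred_eq, coe_biUnion, mem_coe, mem_filter, mem_range, Set.mem_iUnion,
      mem_signedLists, exists_prop]
    constructor
    · rintro ⟨hne, hP, hnz, hsum, hsc⟩
      have := length_le_absSum hnz
      have := List.length_pos_iff.2 hne
      exact ⟨l.length - 1, ⟨by omega, by rwa [Nat.sub_add_cancel ‹_›]⟩, by omega, hnz, hsum, hsc⟩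
    · rintro ⟨m, ⟨-, hP⟩, hl, hnz, hsum, hsc⟩
      exact ⟨List.ne_nil_of_length_eq_add_one hl, hl ▸ hP, hnz, hsum, hsc⟩
  rw [hset, Set.ncard_coe_finset, card_biUnion, mul_sum]
  · refine sum_congr rfl fun m _ => ?_
    rw [card_signedLists]
    ring
  · intro m _ m' _ hmm'
    simp only [Function.onFun, disjoint_left, mem_signedLists]
    intro l h h'
    omega

end SignedLists

section BinomialSums

theorem sum_filter_choose_mul_choose (P : ℕ → Prop) [DecidablePred P] (N ℓ : ℕ) :
    ∑ m ∈ (range (N + 1)).filter P, N.choose m * m.choose ℓ =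
      N.choose ℓ * ∑ i ∈ (range (N - ℓ + 1)).filter (fun i => P (i + ℓ)), (N - ℓ).choose i := by
  rcases lt_or_ge N ℓ with hN | hℓ
  · rw [Nat.choose_eq_zero_of_lt hN, zero_mul]
    exact sum_eq_zero fun m hm => by
      rw [Nat.choose_eq_zero_of_lt (n := m) (by simp at hm; omega), mul_zero]
  · rw [sum_filter, sum_filter, mul_sum, show N + 1 = ℓ + (N - ℓ + 1) by omega, sum_range_add,
      sum_eq_zero fun m hm => by rw [Nat.choose_eq_zero_of_lt (mem_range.1 hm), mul_zero, ite_self],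
      zero_add]
    refine sum_congr rfl fun i hi => ?_
    rw [add_comm ℓ i, Nat.choose_mul (Nat.le_add_left ℓ i), Nat.add_sub_cancel, mul_ite, mul_zero]

theorem sum_range_choose_mul_choose (N ℓ : ℕ) :
    ∑ m ∈ range (N + 1), N.choose m * m.choose ℓ = N.choose ℓ * 2 ^ (N - ℓ) := by
  simpa [Nat.sum_range_choose] using sum_filter_choose_mul_choose (fun _ => True) N ℓ

theorem sum_filter_even_add_choose {N : ℕ} (hN : 0 < N) (r : ℕ) :
    ∑ i ∈ (range (N + 1)).filter (fun i => Even (i + r)), N.choose i = 2 ^ (N - 1) := by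
  have indicator (i : ℕ) (x : ℤ) :
      2 * (if Even (i + r) then x else 0) = x + (-1) ^ r * ((-1) ^ i * x) := by
    rw [← mul_assoc, ← pow_add, add_comm r i]
    split_ifs with h
    · rw [h.neg_one_pow]; ring
    · rw [(Nat.not_even_iff_odd.1 h).neg_one_pow]; ring
  have h2 : (2 : ℤ) * ∑ i ∈ (range (N + 1)).filter (fun i => Even (i + r)), (N.choose i : ℤ) =
      2 * 2 ^ (N - 1) := by
    rw [sum_filter, mul_sum]
    simp_rw [indicator]
    rw [sum_add_distrib, ← mul_sum, Int.alternating_sum_range_choose_of_ne (by omega), mul_zero,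
      add_zero, ← pow_succ', Nat.sub_add_cancel hN]
    exact_mod_cast Nat.sum_range_choose N
  exact_mod_cast (mul_right_inj' two_ne_zero).1 h2

end BinomialSums

section ContinuedFractions

theorem ncard_ECF (S ℓ : ℕ) :
    {l | IsECF l ∧ absSum l = S + 1 ∧ signChanges l = ℓ}.ncard =
      2 * S.choose ℓ *
        ∑ i ∈ (range (S - ℓ + 1)).filter (fun i => Even (i + (ℓ + 1))), (S - ℓ).choose i := by
  have := ncard_nonzero_lists Even S ℓ
  simp only [IsECF, and_assoc] at this ⊢
  rw [this, sum_filter_choose_mul_choose, mul_assoc]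
  rfl

theorem ncard_ECF_of_lt {S ℓ : ℕ} (h : ℓ < S) :
    {l | IsECF l ∧ absSum l = S + 1 ∧ signChanges l = ℓ}.ncard = 2 ^ (S - ℓ) * S.choose ℓ := by
  rw [ncard_ECF, sum_filter_even_add_choose (by omega), ← mul_rotate, mul_comm _ 2, ← pow_succ',
    Nat.sub_add_cancel (by omega)]

theorem ncard_ECF_self (S : ℕ) :
    {l | IsECF l ∧ absSum l = S + 1 ∧ signChanges l = S}.ncard = if Odd S then 2 else 0 := by
  rw [ncard_ECF, Nat.sub_self, Nat.choose_self]
  by_cases h : Odd S <;> simp [h, sum_filter, Nat.even_add_one]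

theorem Eset_eq_setOf {c b S L : ℕ} (hS : S + b = c + 1) (hL : L + 2 * b = c + 2) :
    Eset c b = {l | IsECF l ∧ absSum l = S ∧ signChanges l = L} := by
  ext l
  simp only [Eset, Set.mem_ofPred_eq]
  exact and_congr_right fun _ => by omega

theorem Eset_eq_empty {c b : ℕ} (h : b < 2 ∨ c + 2 < 2 * b) : Eset c b = ∅ := by
  refine Set.eq_empty_of_forall_notMem ?_
  rintro l ⟨⟨hne, -, hnz⟩, hc, hb⟩
  have := length_le_absSum hnz
  have : signChanges l < l.length := signChanges_eq_adjCount l ▸ adjCount_lt_length _ hne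
  omega

theorem e_of_three_le {c b : ℕ} (hb : 3 ≤ b) (hbc : 2 * b ≤ c + 2) :
    e c b = 2 ^ (b - 2) * (c - b).choose (b - 2) := by
  rw [e, Eset_eq_setOf (S := c - b + 1) (L := c + 2 - 2 * b) (by omega) (by omega),
    ncard_ECF_of_lt (by omega), show c - b - (c + 2 - 2 * b) = b - 2 by omega,
    Nat.choose_symm_of_eq_add (b := b - 2) (by omega)]

theorem e_two {c : ℕ} (hc : 2 ≤ c) : e c 2 = if Odd c then 2 else 0 := by
  obtain ⟨d, rfl⟩ := Nat.exists_eq_add_of_le' hc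
  rw [e, Eset_eq_setOf (S := d + 1) (L := d) (by omega) (by omega), ncard_ECF_self]
  simp [Nat.odd_add]

end ContinuedFractions

section Palindromes

/-- The factor `(-1) ^ L` makes the result palindromic for even `L` and anti-palindromic for
odd `L`, matching the parity of its number of sign changes. -/
def mirrorAppend (L : ℕ) (h : List ℤ) : List ℤ :=
  h ++ (h.map ((-1) ^ L * ·)).reverse

theorem absSum_mirrorAppend (L : ℕ) (h : List ℤ) :
    absSum (mirrorAppend L h) = 2 * absSum h := by
  simp [mirrorAppend, absSum, Function.comp_def, Int.natAbs_mul, two_mul]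

theorem signChanges_mirrorAppend (L : ℕ) {h : List ℤ} (hne : h ≠ []) (hnz : ∀ x ∈ h, x ≠ 0) :
    signChanges (mirrorAppend L h) = 2 * signChanges h + L % 2 := by
  have hne' : (h.map ((-1) ^ L * ·)).reverse ≠ [] := by simpa using hne
  rw [signChanges_eq_adjCount, mirrorAppend, adjCount_append _ hne hne',
    adjCount_reverse (fun a b => by rw [mul_comm]), adjCount_map, List.head_reverse,
    List.getLast_map, ← signChanges_eq_adjCount]
  have hsq : ((-1 : ℤ) ^ L) * (-1) ^ L = 1 := pow_mul_pow_eq_one L (by norm_num)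
  have hx := hnz _ (List.getLast_mem hne)
  have hmirror : adjCount (fun a b => decide ((-1) ^ L * a * ((-1) ^ L * b) < 0)) h =
      signChanges h := by
    simp only [signChanges_eq_adjCount, mul_mul_mul_comm _ _ ((-1 : ℤ) ^ L), hsq, one_mul]
  rw [hmirror]
  rcases Nat.even_or_odd L with hL | hL
  · simp [hL.neg_one_pow, Nat.even_iff.1 hL, not_lt.2 (mul_self_nonneg _), two_mul]
  · simp [hL.neg_one_pow, Nat.odd_iff.1 hL, hx, two_mul]

theorem eq_mirrorAppend_of_reverse_eq_map {L : ℕ} {l : List ℤ} (hl : Even l.length)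
    (h : l.reverse = l.map ((-1) ^ L * ·)) :
    l = mirrorAppend L (l.take (l.length / 2)) := by
  obtain ⟨k, hk⟩ := hl
  rw [mirrorAppend, List.map_take, ← h, List.reverse_take, List.reverse_reverse,
    List.length_reverse, show l.length - l.length / 2 = l.length / 2 by omega,
    List.take_append_drop]

theorem reverse_mirrorAppend (L : ℕ) (h : List ℤ) :
    (mirrorAppend L h).reverse = (mirrorAppend L h).map ((-1) ^ L * ·) := by
  have hsq : ((-1 : ℤ) ^ L) * (-1) ^ L = 1 := pow_mul_pow_eq_one L (by norm_num)
  simp [mirrorAppend, List.map_reverse, Function.comp_def, ← mul_assoc, hsq]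

theorem isPalOrAnti_mirrorAppend (L : ℕ) (h : List ℤ) : IsPalOrAnti (mirrorAppend L h) := by
  have := reverse_mirrorAppend L h
  rcases Nat.even_or_odd L with hL | hL
  · exact Or.inl (by simpa [hL.neg_one_pow] using this)
  · exact Or.inr (by simpa [hL.neg_one_pow] using this)

theorem mirrorAppend_injective (L : ℕ) : Function.Injective (mirrorAppend L) := by
  intro h h' heq
  have hlen := congrArg List.length heq
  simp only [mirrorAppend, List.length_append, List.length_reverse, List.length_map] at hlen
  exact (List.append_inj heq (by omega)).1

theorem IsECF.take_half_ne_nil {l : List ℤ} (hl : IsECF l) : l.take (l.length / 2) ≠ [] := by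
  obtain ⟨hne, ⟨k, hk⟩, -⟩ := hl
  have := List.length_pos_iff.2 hne
  simp only [ne_eq, List.take_eq_nil_iff, hne, or_false]
  omega

theorem IsECF.take_half_nonzero {l : List ℤ} (hl : IsECF l) :
    ∀ x ∈ l.take (l.length / 2), x ≠ 0 :=
  fun x hx => hl.2.2 x (List.mem_of_mem_take hx)

theorem IsPalOrAnti.eq_mirrorAppend {l : List ℤ} (hl : IsECF l) (hp : IsPalOrAnti l) :
    l = mirrorAppend (signChanges l) (l.take (l.length / 2)) := by
  obtain ⟨L, hL⟩ : ∃ L, l.reverse = l.map ((-1) ^ L * ·) :=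
    hp.elim (fun h => ⟨0, by simpa using h⟩) (fun h => ⟨1, by simpa using h⟩)
  have hdec := eq_mirrorAppend_of_reverse_eq_map hl.2.1 hL
  have hsc := congrArg signChanges hdec
  rw [signChanges_mirrorAppend L hl.take_half_ne_nil hl.take_half_nonzero] at hsc
  conv_lhs => rw [hdec]
  rw [mirrorAppend, mirrorAppend, neg_one_pow_eq_pow_mod_two (n := L),
    neg_one_pow_eq_pow_mod_two (n := signChanges l), show signChanges l % 2 = L % 2 by omega]

theorem setOf_isPalOrAnti_eq_image (A L : ℕ) :
    {l | (IsECF l ∧ absSum l = A ∧ signChanges l = L) ∧ IsPalOrAnti l} =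
      mirrorAppend L ''
        {h | h ≠ [] ∧ (∀ x ∈ h, x ≠ 0) ∧ 2 * absSum h = A ∧ signChanges h = L / 2} := by
  ext l
  constructor
  · rintro ⟨⟨hl, rfl, rfl⟩, hp⟩
    have hsc := signChanges_mirrorAppend (signChanges l) hl.take_half_ne_nil hl.take_half_nonzero
    have habs := absSum_mirrorAppend (signChanges l) (l.take (l.length / 2))
    rw [← hp.eq_mirrorAppend hl] at hsc habs
    exact ⟨_, ⟨hl.take_half_ne_nil, hl.take_half_nonzero, habs.symm, by omega⟩,
      (hp.eq_mirrorAppend hl).symm⟩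
  · rintro ⟨h, ⟨hne, hnz, rfl, hL⟩, rfl⟩
    refine ⟨⟨⟨by simp [mirrorAppend, hne], ?_, ?_⟩, absSum_mirrorAppend L h, ?_⟩,
      isPalOrAnti_mirrorAppend L h⟩
    · simp [mirrorAppend]
    · simp only [mirrorAppend, List.mem_append, List.mem_reverse, List.mem_map]
      rintro x (hx | ⟨a, ha, rfl⟩)
      · exact hnz x hx
      · exact mul_ne_zero (pow_ne_zero _ (by norm_num)) (hnz a ha)
    · rw [signChanges_mirrorAppend L hne hnz]
      omega

theorem ncard_isPalOrAnti (S L : ℕ) :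
    {l | (IsECF l ∧ absSum l = 2 * (S + 1) ∧ signChanges l = L) ∧ IsPalOrAnti l}.ncard =
      2 ^ (S - L / 2 + 1) * S.choose (L / 2) := by
  rw [setOf_isPalOrAnti_eq_image, Set.ncard_image_of_injective _ (mirrorAppend_injective L)]
  have := ncard_nonzero_lists (fun _ => True) S (L / 2)
  simp only [true_and, filter_true] at this
  simp only [mul_eq_mul_left_iff, OfNat.ofNat_ne_zero, or_false]
  rw [this, sum_range_choose_mul_choose, pow_succ]
  ring

theorem ep_eq {c b : ℕ} (hb : 2 ≤ b) (hbc : 2 * b ≤ c + 2) :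
    ep c b = if Odd (c + b) then
      2 ^ ((b - 2) / 2 + 1) * ((c - b - 1) / 2).choose ((b - 2) / 2) else 0 := by
  rw [ep, Eset_eq_setOf (S := c + 1 - b) (L := c + 2 - 2 * b) (by omega) (by omega),
    ← Set.ofPred_and]
  split_ifs with hodd
  · rw [Nat.odd_iff] at hodd
    rw [show c + 1 - b = 2 * ((c - b - 1) / 2 + 1) by omega, ncard_isPalOrAnti,
      show (c - b - 1) / 2 - (c + 2 - 2 * b) / 2 = (b - 2) / 2 by omega,
      Nat.choose_symm_of_eq_add (b := (b - 2) / 2) (by omega)]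
  · rw [Nat.not_odd_iff_even, Nat.even_iff] at hodd
    have hempty : {h : List ℤ | h ≠ [] ∧ (∀ x ∈ h, x ≠ 0) ∧ 2 * absSum h = c + 1 - b ∧
        signChanges h = (c + 2 - 2 * b) / 2} = ∅ :=
      Set.eq_empty_of_forall_notMem fun h ⟨_, _, habs, _⟩ => by omega
    rw [setOf_isPalOrAnti_eq_image, hempty, Set.image_empty, Set.ncard_empty]

end Palindromes

theorem numKnots_eq_zero {c b : ℕ} (h : b < 2 ∨ c + 2 < 2 * b) : numKnots c b = 0 := by
  simp [numKnots, e, ep, Eset_eq_empty h]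

theorem two_zpow_eq_div_four {k : ℤ} {n : ℕ} (h : k + 2 = n) : (2 : ℚ) ^ k = 2 ^ n / 4 := by
  rw [show k = (n : ℤ) - 2 by omega, zpow_sub₀ two_ne_zero, zpow_natCast]
  norm_num

theorem numKnots_closed_formula (c b : ℕ) :
    numKnots c b =
      if 3 ≤ c ∧ Odd c ∧ b = 2 then 1
      else if 3 ≤ c ∧ 3 ≤ b ∧ b ≤ (c + 2) / 2 ∧ Even (c + b) then
        (2 : ℚ) ^ ((b : ℤ) - 4) * (Nat.choose (c - b) (b - 2) : ℚ)
      else if 3 ≤ c ∧ 3 ≤ b ∧ b ≤ (c + 2) / 2 ∧ Even c ∧ Odd b then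
        (2 : ℚ) ^ ((b : ℤ) - 4) * (Nat.choose (c - b) (b - 2) : ℚ)
          + (2 : ℚ) ^ (((b : ℤ) - 5) / 2) * (Nat.choose ((c - b - 1) / 2) ((b - 3) / 2) : ℚ)
      else if 3 ≤ c ∧ 3 ≤ b ∧ b ≤ (c + 2) / 2 ∧ Odd c ∧ Even b then
        (2 : ℚ) ^ ((b : ℤ) - 4) * (Nat.choose (c - b) (b - 2) : ℚ)
          + (2 : ℚ) ^ (((b : ℤ) - 4) / 2) * (Nat.choose ((c - b - 1) / 2) ((b - 2) / 2) : ℚ)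
      else 0 := by
  by_cases hreg : 2 ≤ b ∧ 2 * b ≤ c + 2
  swap
  · rw [numKnots_eq_zero (by omega)]
    simp only [Nat.odd_iff, Nat.even_iff]
    split_ifs <;> first | rfl | omega
  obtain ⟨hb, hbc⟩ := hreg
  rw [numKnots, ep_eq hb hbc]
  obtain rfl | hb3 : b = 2 ∨ 3 ≤ b := by omega
  · rw [e_two (by omega)]
    simp only [Nat.odd_iff, Nat.even_iff, and_true]
    split_ifs <;> first | omega | norm_num
  · rw [e_of_three_le hb3 hbc, two_zpow_eq_div_four (k := (b : ℤ) - 4) (n := b - 2) (by omega)]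
    simp only [Nat.odd_iff, Nat.even_iff]
    split_ifs <;> first | omega | skip
    · rw [two_zpow_eq_div_four (k := ((b : ℤ) - 5) / 2) (n := (b - 2) / 2 + 1) (by omega),
        show (b - 3) / 2 = (b - 2) / 2 by omega]
      push_cast
      ring
    · rw [two_zpow_eq_div_four (k := ((b : ℤ) - 4) / 2) (n := (b - 2) / 2 + 1) (by omega)]
      push_cast
      ring
    · push_cast
      ring
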